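/- Let J: ℝ^N → ℝ be K-Lipschitz with respect to the L¹ norm, with K ≤ ω_max·δt/2 for constants ω_max, δt > 0. Suppose u*, u*⊥ ∈ [-u_max, u_max]^N satisfy J(u*) = 0 and J(u*⊥) = 1. Then N·δt ≥ 1/(ω_max · u_max), i.e., the total time T = N·δt is bounded below by 1/(ω_max·u_max). -/
import Mathlib

open Finset

/-- **Quantum speed limit from Lipschitz continuity.** If `J : ℝ^N → ℝ` is
`K`-Lipschitz in the L¹ norm with `K ≤ ω_max·δt/2`, and the hypercube
`[-u_max, u_max]^N` contains controls `u*` with `J(u*) = 0` and `u*⊥` with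
`J(u*⊥) = 1`, then the total time `T = N·δt` satisfies
`T ≥ 1/(ω_max·u_max)`. -/
theorem quantum_speed_limit_lower_bound
    {N : ℕ} (J : (Fin N → ℝ) → ℝ) (K ωmax δt umax : ℝ)
    (hωmax : 0 < ωmax) (hδt : 0 < δt) (humax : 0 < umax)
    (hLip : ∀ u u' : Fin N → ℝ, |J u - J u'| ≤ K * ∑ i, |u i - u' i|)
    (hK : K ≤ ωmax * δt / 2)
    (ustar uperp : Fin N → ℝ)
    (hustar : ustar ∈ Set.Icc (fun _ => -umax : Fin N → ℝ) (fun _ => umax))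
    (huperp : uperp ∈ Set.Icc (fun _ => -umax : Fin N → ℝ) (fun _ => umax))
    (h0 : J ustar = 0) (h1 : J uperp = 1) :
    1 / (ωmax * umax) ≤ (N : ℝ) * δt := by
  obtain ⟨hs1, hs2⟩ := hustar
  obtain ⟨hp1, hp2⟩ := huperp
  simp only [Pi.le_def] at hs1 hs2 hp1 hp2
  have hsum : ∑ i, |uperp i - ustar i| ≤ 2 * umax * N := by
    calc ∑ i, |uperp i - ustar i| ≤ ∑ _i : Fin N, 2 * umax := by
          apply Finset.sum_le_sum
          intro i _
          rw [abs_le]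
          constructor <;> [nlinarith [hs2 i, hp1 i]; nlinarith [hs1 i, hp2 i]]
      _ = 2 * umax * N := by simp [mul_comm]
  have h1' : (1 : ℝ) ≤ K * ∑ i, |uperp i - ustar i| := by
    have := hLip uperp ustar
    rw [h0, h1] at this
    simpa using this
  have hK0 : 0 ≤ K := by
    by_contra h
    push_neg at h
    have hsum0 : 0 ≤ ∑ i, |uperp i - ustar i| :=
      Finset.sum_nonneg fun i _ => abs_nonneg _
    nlinarith
  have : (1 : ℝ) ≤ ωmax * umax * ((N : ℝ) * δt) := by
    have h2 : K * ∑ i, |uperp i - ustar i| ≤ (ωmax * δt / 2) * (2 * umax * N) := by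
      apply mul_le_mul hK hsum (Finset.sum_nonneg fun i _ => abs_nonneg _)
      positivity
    nlinarith
  rw [div_le_iff₀ (by positivity)]
  nlinarith
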